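/- Fix $0<p<1/2$ and $n$. If the Courtade–Kumar conjecture holds for all balanced Boolean functions on $\{0,1\}^n$ at noise level $p$ (i.e., $I(f(Y);X)\leq 1-h(p)$ for every balanced $f$), then the symmetrized Li–Médard conjecture holds: $N^{\mathsf{sym}}_\alpha(f)\leq N^{\mathsf{sym}}_\alpha(f_0)$ for every balanced $f$ and every $\alpha\in[1,2]$. -/

import Mathlib

open Finset Real Filter

/-- The noise operator `T_p` applied to a Boolean function on the Hamming cube. -/
noncomputable def Tp (n : ℕ) (p : ℝ) (f : (Fin n → Bool) → Bool) (x : Fin n → Bool) : ℝ :=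
  ∑ y : Fin n → Bool,
    p ^ hammingDist x y * (1 - p) ^ (n - hammingDist x y) * (if f y then 1 else 0)

/-- A Boolean function is balanced if it takes the value 1 exactly half the time. -/
def IsBalanced (n : ℕ) (f : (Fin n → Bool) → Bool) : Prop :=
  ∑ y : Fin n → Bool, (if f y then (1 : ℝ) else 0) = 2 ^ n / 2

/-- Dictatorship function on coordinate `i`. -/
def dict (n : ℕ) (i : Fin n) : (Fin n → Bool) → Bool := fun y => y i

/-- `N_α(f) = ∑_x (T_p f x)^α` (real power). -/
noncomputable def Nal (n : ℕ) (p : ℝ) (f : (Fin n → Bool) → Bool) (α : ℝ) : ℝ :=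
  ∑ x : Fin n → Bool, Tp n p f x ^ α

/-- Symmetrized version `N^sym_α(f) = ∑_x (T_p f x)^α + (1 - T_p f x)^α`. -/
noncomputable def Nsym (n : ℕ) (p : ℝ) (f : (Fin n → Bool) → Bool) (α : ℝ) : ℝ :=
  ∑ x : Fin n → Bool, (Tp n p f x ^ α + (1 - Tp n p f x) ^ α)

/-- Binary entropy function, in bits. -/
noncomputable def binEnt (t : ℝ) : ℝ := -(t * Real.logb 2 t) - (1 - t) * Real.logb 2 (1 - t)

/-- Mutual information `I(f(Y); X)` for a balanced Boolean function `f`,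
with `X` uniform on the cube and `Y` the output of a BSC(p) on input `X`. -/
noncomputable def MI (n : ℕ) (p : ℝ) (f : (Fin n → Bool) → Bool) : ℝ :=
  1 - ((2 : ℝ) ^ n)⁻¹ * ∑ x : Fin n → Bool, binEnt (Tp n p f x)

/-!
Write `g(α) = N^sym_α(f) - N^sym_α(f₀)` as an exponential sum `∑ⱼ cⱼ uⱼ ^ α`, whose bases are the
numbers `T_p f x`, `1 - T_p f x` (coefficient `1`) and `p`, `1 - p` (coefficient `-2 ^ n`).
Then `g(0) = g(1) = 0`, and a spectral-gap estimate in the Walsh basis gives `g(2) < 0` unless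
`T_p f` only takes the values `p` and `1 - p`, in which case `g = 0`. The Courtade–Kumar
inequality for `f` says exactly that `g'(1) ≤ 0`.

If `g(α) > 0` for some `α ∈ (1, 2)`, Rolle's theorem gives `g'` three zeros below `2`; when some
`T_p f x` lies outside `[p, 1 - p]`, `g` is eventually positive, has a zero beyond `2`, and `g'`
gets five zeros. But the coefficients `cⱼ log uⱼ` of `g'`, ordered by `uⱼ`, change sign at most
twice, respectively four times, so by Descartes' rule of signs `g'` has at most two, respectively
four, zeros.
-/

namespace BoolCube

variable {n : ℕ}

noncomputable def walsh (S : Finset (Fin n)) (x : Fin n → Bool) : ℝ :=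
  ∏ i ∈ S, if x i then -1 else 1

noncomputable def fourierCoeff (φ : (Fin n → Bool) → ℝ) (S : Finset (Fin n)) : ℝ :=
  (2 ^ n)⁻¹ * ∑ x, φ x * walsh S x

theorem sum_walsh_mul_walsh (x y : Fin n → Bool) :
    ∑ S, walsh S x * walsh S y = if x = y then 2 ^ n else 0 := by
  have hcoord : ∀ i, 1 + (if x i then -1 else 1) * (if y i then -1 else 1) =
      if x i = y i then (2 : ℝ) else 0 := by
    intro i; cases x i <;> cases y i <;> norm_num
  calc ∑ S, walsh S x * walsh S y
      = ∑ S ∈ univ.powerset, ∏ i ∈ S, (if x i then -1 else 1) * (if y i then (-1 : ℝ) else 1) := by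
        simp only [powerset_univ, walsh, prod_mul_distrib]
    _ = ∏ i, if x i = y i then (2 : ℝ) else 0 := by rw [← prod_one_add]; simp only [hcoord]
    _ = if x = y then 2 ^ n else 0 := by
        split_ifs with h
        · simp [h]
        · obtain ⟨i, hi⟩ := Function.ne_iff.mp h
          exact prod_eq_zero (mem_univ i) (if_neg hi)

theorem sum_fourierCoeff_mul_walsh (φ : (Fin n → Bool) → ℝ) (x : Fin n → Bool) :
    ∑ S, fourierCoeff φ S * walsh S x = φ x := by
  calc ∑ S, fourierCoeff φ S * walsh S x
      = (2 ^ n)⁻¹ * ∑ y, φ y * ∑ S, walsh S y * walsh S x := by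
        simp only [fourierCoeff, mul_sum, sum_mul, mul_assoc]
        exact sum_comm
    _ = φ x := by simp [sum_walsh_mul_walsh]; field_simp

theorem sum_sq_eq_sum_fourierCoeff_sq (φ : (Fin n → Bool) → ℝ) :
    ∑ x, φ x ^ 2 = 2 ^ n * ∑ S, fourierCoeff φ S ^ 2 := by
  calc ∑ x, φ x ^ 2 = ∑ x, φ x * ∑ S, fourierCoeff φ S * walsh S x := by
        simp only [sum_fourierCoeff_mul_walsh, sq]
    _ = ∑ S, fourierCoeff φ S * ∑ x, φ x * walsh S x := by
        simp only [mul_sum]; rw [sum_comm]; simp only [mul_left_comm]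
    _ = 2 ^ n * ∑ S, fourierCoeff φ S ^ 2 := by
        simp only [mul_sum, fourierCoeff, sq]
        refine sum_congr rfl fun S _ => ?_
        field_simp

theorem fourierCoeff_sub_mul (φ ψ : (Fin n → Bool) → ℝ) (c : ℝ) (S : Finset (Fin n)) :
    fourierCoeff (fun x => φ x - c * ψ x) S = fourierCoeff φ S - c * fourierCoeff ψ S := by
  simp only [fourierCoeff, sub_mul, sum_sub_distrib, mul_assoc, ← mul_sum]
  ring

theorem fourierCoeff_empty (φ : (Fin n → Bool) → ℝ) :
    fourierCoeff φ ∅ = (2 ^ n)⁻¹ * ∑ x, φ x := by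
  simp [fourierCoeff, walsh]

noncomputable def noiseWeight (n : ℕ) (p : ℝ) (x y : Fin n → Bool) : ℝ :=
  p ^ hammingDist x y * (1 - p) ^ (n - hammingDist x y)

/-- `Tp n p f` is, by definition, `noise n p` applied to the indicator of `f`. -/
noncomputable def noise (n : ℕ) (p : ℝ) (φ : (Fin n → Bool) → ℝ) (x : Fin n → Bool) : ℝ :=
  ∑ y, noiseWeight n p x y * φ y

variable (p : ℝ)

theorem noiseWeight_comm (x y : Fin n → Bool) : noiseWeight n p x y = noiseWeight n p y x := by
  rw [noiseWeight, noiseWeight, hammingDist_comm]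

theorem noiseWeight_pos (hp0 : 0 < p) (hp1 : p < 1) (x y : Fin n → Bool) :
    0 < noiseWeight n p x y := by
  have : 0 < 1 - p := by linarith
  unfold noiseWeight
  positivity

theorem noiseWeight_eq_prod (x y : Fin n → Bool) :
    noiseWeight n p x y = ∏ i, if x i = y i then 1 - p else p := by
  classical
  have hsame : #{i | x i = y i} = n - hammingDist x y := by
    have := card_filter_add_card_filter_not (s := univ) (p := fun i => x i = y i)
    simp only [card_univ, Fintype.card_fin] at this
    simp only [hammingDist, ne_eq]
    omega
  rw [noiseWeight, prod_ite, prod_const, prod_const, hsame, mul_comm]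
  rfl

theorem noise_walsh (S : Finset (Fin n)) (x : Fin n → Bool) :
    noise n p (walsh S) x = (1 - 2 * p) ^ #S * walsh S x := by
  classical
  have hcoord : ∀ i, ∑ b : Bool, (if x i = b then 1 - p else p) *
      (if i ∈ S then (if b then -1 else 1) else 1) =
        if i ∈ S then (1 - 2 * p) * (if x i then -1 else 1) else 1 := by
    intro i; by_cases hi : i ∈ S <;> cases x i <;> simp [hi] <;> ring
  calc noise n p (walsh S) x
      = ∑ y : Fin n → Bool, ∏ i, (if x i = y i then 1 - p else p) *
          (if i ∈ S then (if y i then -1 else 1) else 1) := by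
        simp only [noise, noiseWeight_eq_prod, walsh, prod_mul_distrib, prod_ite_mem, univ_inter]
    _ = ∏ i, ∑ b : Bool, (if x i = b then 1 - p else p) *
          (if i ∈ S then (if b then -1 else 1) else 1) := by rw [Fintype.prod_sum]
    _ = ∏ i, if i ∈ S then (1 - 2 * p) * (if x i then -1 else 1) else 1 := by simp only [hcoord]
    _ = (1 - 2 * p) ^ #S * walsh S x := by
        rw [prod_ite_mem, univ_inter, prod_mul_distrib, prod_const, walsh]

theorem sum_noiseWeight (x : Fin n → Bool) : ∑ y, noiseWeight n p x y = 1 := by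
  simpa [noise, walsh] using noise_walsh p ∅ x

theorem noise_sub_const (φ : (Fin n → Bool) → ℝ) (a : ℝ) (x : Fin n → Bool) :
    noise n p (fun y => φ y - a) x = noise n p φ x - a := by
  simp only [noise, mul_sub, sum_sub_distrib, ← sum_mul, sum_noiseWeight, one_mul]

theorem noise_const_mul (a : ℝ) (φ : (Fin n → Bool) → ℝ) (x : Fin n → Bool) :
    noise n p (fun y => a * φ y) x = a * noise n p φ x := by
  simp only [noise, mul_sum, mul_left_comm]

theorem fourierCoeff_noise (φ : (Fin n → Bool) → ℝ) (S : Finset (Fin n)) :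
    fourierCoeff (noise n p φ) S = (1 - 2 * p) ^ #S * fourierCoeff φ S := by
  calc fourierCoeff (noise n p φ) S
      = (2 ^ n)⁻¹ * ∑ y, φ y * noise n p (walsh S) y := by
        simp only [fourierCoeff, noise, sum_mul, mul_sum]
        rw [sum_comm]
        simp only [mul_assoc, mul_left_comm _ (φ _), noiseWeight_comm p _ (_ : Fin n → Bool)]
    _ = (1 - 2 * p) ^ #S * fourierCoeff φ S := by
        simp only [noise_walsh, fourierCoeff, mul_sum]
        ring_nf

/-- In the Walsh basis `noise` multiplies the level-`k` coefficients by `ρ ^ k`, `ρ = 1 - 2p`,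
and `ρ ^ (2k) + (ρ ^ k - ρ) ^ 2 ≤ ρ ^ 2` for `k ≥ 1`. -/
theorem sum_sq_noise_add_sum_sq_noise_sub_le (hp0 : 0 ≤ p) (hp : p ≤ 1 / 2)
    (φ : (Fin n → Bool) → ℝ) (hφ : ∑ x, φ x = 0) :
    ∑ x, noise n p φ x ^ 2 + ∑ x, (noise n p φ x - (1 - 2 * p) * φ x) ^ 2 ≤
      (1 - 2 * p) ^ 2 * ∑ x, φ x ^ 2 := by
  set ρ := 1 - 2 * p with hρ
  have hcoeff : ∀ S, (ρ ^ #S * fourierCoeff φ S) ^ 2 +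
      (ρ ^ #S * fourierCoeff φ S - ρ * fourierCoeff φ S) ^ 2 ≤ ρ ^ 2 * fourierCoeff φ S ^ 2 := by
    intro S
    rcases S.eq_empty_or_nonempty with rfl | hS
    · simp [fourierCoeff_empty, hφ]
    obtain ⟨m, hm⟩ : ∃ m, #S = m + 1 := ⟨#S - 1, by have := hS.card_pos; omega⟩
    have ht0 : 0 ≤ ρ ^ m := pow_nonneg (by linarith) m
    have ht1 : ρ ^ m ≤ 1 := pow_le_one₀ (by linarith) (by linarith)
    rw [hm, pow_succ ρ m]
    nlinarith [mul_nonneg (mul_nonneg ht0 (sub_nonneg.2 ht1)) (sq_nonneg (ρ * fourierCoeff φ S))]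
  rw [sum_sq_eq_sum_fourierCoeff_sq (noise n p φ), sum_sq_eq_sum_fourierCoeff_sq φ,
    sum_sq_eq_sum_fourierCoeff_sq (fun x => noise n p φ x - ρ * φ x)]
  simp only [fourierCoeff_sub_mul, fourierCoeff_noise, ← hρ]
  rw [← mul_add, ← sum_add_distrib, mul_left_comm, mul_sum _ _ (ρ ^ 2)]
  gcongr with S
  exact hcoeff S

end BoolCube

open Topology

section Rolle

variable {f f' : ℝ → ℝ}

theorem exists_strictMono_hasDerivAt_eq_zero (hf : ∀ x, HasDerivAt f (f' x) x) {k : ℕ}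
    {z : Fin (k + 1) → ℝ} (hz : StrictMono z) (hzero : ∀ i, f (z i) = 0) :
    ∃ ξ : Fin k → ℝ, StrictMono ξ ∧ ∀ i, f' (ξ i) = 0 := by
  have hcont : Continuous f := continuous_iff_continuousAt.2 fun x => (hf x).continuousAt
  have hrolle : ∀ i : Fin k, ∃ ξ ∈ Set.Ioo (z i.castSucc) (z i.succ), f' ξ = 0 := fun i =>
    exists_hasDerivAt_eq_zero (hz Fin.castSucc_lt_succ) hcont.continuousOn
      ((hzero _).trans (hzero _).symm) fun x _ => hf x
  choose ξ hξ hξ0 using hrolle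
  refine ⟨ξ, fun i j hij => ?_, hξ0⟩
  calc ξ i < z i.succ := (hξ i).2
    _ ≤ z j.castSucc := hz.monotone (Fin.succ_le_castSucc_iff.2 hij)
    _ < ξ j := (hξ j).1

theorem exists_two_hasDerivAt_eq_zero_of_deriv_nonpos (hf : ∀ x, HasDerivAt f (f' x) x)
    {a b c : ℝ} (hac : a < c) (hcb : c < b) (ha : f a = 0) (hb : f b = 0) (hda : f' a ≤ 0)
    (hc : 0 < f c) : ∃ ξ η, a ≤ ξ ∧ ξ < η ∧ η < b ∧ f' ξ = 0 ∧ f' η = 0 := by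
  have hcont : Continuous f := continuous_iff_continuousAt.2 fun x => (hf x).continuousAt
  rcases hda.eq_or_lt with hda | hda
  · obtain ⟨η, hη, hη0⟩ := exists_hasDerivAt_eq_zero (hac.trans hcb) hcont.continuousOn
      (ha.trans hb.symm) fun x _ => hf x
    exact ⟨a, η, le_rfl, hη.1, hη.2, hda, hη0⟩
  obtain ⟨β, hβ, hfβ⟩ : ∃ β ∈ Set.Ioo a c, f β < 0 := by
    have hslope := (hf a).tendsto_slope_zero_right.eventually (gt_mem_nhds hda)
    obtain ⟨t, hneg, ht⟩ := (hslope.and (Ioo_mem_nhdsGT (sub_pos.2 hac))).exists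
    refine ⟨a + t, ⟨by linarith [ht.1], by linarith [ht.2]⟩, ?_⟩
    rw [ha, sub_zero, smul_eq_mul] at hneg
    simpa [ht.1.ne'] using mul_neg_of_pos_of_neg ht.1 hneg
  obtain ⟨ζ, hζ, hζ0⟩ := intermediate_value_Ioo hβ.2.le hcont.continuousOn
    (show (0 : ℝ) ∈ Set.Ioo (f β) (f c) from ⟨hfβ, hc⟩)
  obtain ⟨ξ, hξ, hξ0⟩ := exists_hasDerivAt_eq_zero (hβ.1.trans hζ.1) hcont.continuousOn
    (ha.trans hζ0.symm) fun x _ => hf x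
  obtain ⟨η, hη, hη0⟩ := exists_hasDerivAt_eq_zero (hζ.2.trans hcb)
    hcont.continuousOn (hζ0.trans hb.symm) fun x _ => hf x
  exact ⟨ξ, η, hξ.1.le, hξ.2.trans hη.1, hη.2, hξ0, hη0⟩

theorem exists_hasDerivAt_eq_zero_of_tendsto_atTop (hf : ∀ x, HasDerivAt f (f' x) x)
    {a l : ℝ} (ha : f a = l) (hgt : ∀ᶠ x in atTop, l < f x) (hlim : Tendsto f atTop (𝓝 l)) :
    ∃ ξ, a < ξ ∧ f' ξ = 0 := by
  have hcont : Continuous f := continuous_iff_continuousAt.2 fun x => (hf x).continuousAt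
  obtain ⟨b, hfb, hab⟩ := (hgt.and (eventually_gt_atTop a)).exists
  obtain ⟨c, ⟨hfc, hcb⟩, hbc⟩ :=
    ((hgt.and (hlim.eventually (gt_mem_nhds hfb))).and (eventually_gt_atTop b)).exists
  obtain ⟨d, hd, hfd⟩ := intermediate_value_Ioo hab.le hcont.continuousOn
    (show f c ∈ Set.Ioo (f a) (f b) from ⟨ha ▸ hfc, hcb⟩)
  obtain ⟨ξ, hξ, hξ0⟩ := exists_hasDerivAt_eq_zero (hd.2.trans hbc) hcont.continuousOn hfd
    fun x _ => hf x
  exact ⟨ξ, hd.1.trans hξ.1, hξ0⟩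

end Rolle

section ExpSum

variable {ι : Type*} [Fintype ι]

noncomputable def expSum (u c : ι → ℝ) (α : ℝ) : ℝ := ∑ j, c j * u j ^ α

theorem hasDerivAt_expSum {u : ι → ℝ} (hu : ∀ j, 0 < u j) (c : ι → ℝ) (α : ℝ) :
    HasDerivAt (expSum u c) (expSum u (fun j => c j * log (u j)) α) α :=
  (HasDerivAt.fun_sum (u := univ) fun j _ =>
    (hasStrictDerivAt_const_rpow (hu j) α).hasDerivAt.const_mul (c j)).congr_deriv
      (sum_congr rfl fun j _ => by ring)

theorem expSum_neg (u c : ι → ℝ) (α : ℝ) : expSum u (fun j => -c j) α = -expSum u c α := by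
  simp [expSum, sum_neg_distrib]

theorem expSum_div_const {u : ι → ℝ} (hu : ∀ j, 0 ≤ u j) {w : ℝ} (hw : 0 ≤ w) (c : ι → ℝ)
    (α : ℝ) : expSum (fun j => u j / w) c α = expSum u c α / w ^ α := by
  simp only [expSum, div_rpow (hu _) hw, sum_div, mul_div_assoc]

theorem exists_strictMono_expSum_mul_log_eq_zero {u : ι → ℝ} (hu : ∀ j, 0 < u j) {c : ι → ℝ}
    {w : ℝ} (hw : 0 < w) {k : ℕ} {z : Fin (k + 1) → ℝ} (hz : StrictMono z)
    (hzero : ∀ i, expSum u c (z i) = 0) :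
    ∃ ξ : Fin k → ℝ, StrictMono ξ ∧ ∀ i, expSum u (fun j => c j * log (u j / w)) (ξ i) = 0 := by
  have hu' : ∀ j, 0 ≤ u j := fun j => (hu j).le
  obtain ⟨ξ, hξ, hξ0⟩ := exists_strictMono_hasDerivAt_eq_zero
    (hasDerivAt_expSum (fun j => div_pos (hu j) hw) c) hz
    fun i => by rw [expSum_div_const hu' hw.le, hzero, zero_div]
  refine ⟨ξ, hξ, fun i => ?_⟩
  have := hξ0 i
  rw [expSum_div_const hu' hw.le, div_eq_zero_iff] at this
  exact this.resolve_right (rpow_pos_of_pos hw _).ne'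

/-- Descartes' rule of signs for exponential sums, in Rolle form: each pivot `w` costs one zero
and multiplies the coefficients by `log (u j / w)`; once all coefficients have one sign, a single
zero forces them to vanish. -/
theorem expSum_coeff_eq_zero_of_strictMono_zeros {u : ι → ℝ} (hu : ∀ j, 0 < u j) (ws : List ℝ)
    (hws : ∀ w ∈ ws, 0 < w) (c : ι → ℝ)
    (hsign : ∀ j, 0 ≤ c j * (ws.map fun w => log (u j / w)).prod)
    {z : Fin (ws.length + 1) → ℝ} (hz : StrictMono z) (hzero : ∀ i, expSum u c (z i) = 0)
    {j : ι} (hj : u j ∉ ws) : c j = 0 := by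
  induction ws generalizing c with
  | nil =>
    simp only [List.map_nil, List.prod_nil, mul_one] at hsign
    have hterms : ∀ j ∈ univ, 0 ≤ c j * u j ^ z 0 := fun j _ =>
      mul_nonneg (hsign j) (rpow_nonneg (hu j).le _)
    have := (sum_eq_zero_iff_of_nonneg hterms).1 (hzero 0) j (mem_univ j)
    exact (mul_eq_zero.1 this).resolve_right (rpow_pos_of_pos (hu j) _).ne'
  | cons w ws ih =>
    rw [List.mem_cons, not_or] at hj
    have hw : 0 < w := hws w List.mem_cons_self
    obtain ⟨ξ, hξ, hξ0⟩ := exists_strictMono_expSum_mul_log_eq_zero hu hw hz hzero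
    have := ih (fun w hw => hws w (List.mem_cons_of_mem _ hw)) (fun j => c j * log (u j / w))
      (fun j => by simpa [mul_assoc] using hsign j) hξ hξ0 hj.2
    refine (mul_eq_zero.1 this).resolve_right (log_ne_zero_of_pos_of_ne_one (div_pos (hu j) hw) ?_)
    rw [ne_eq, div_eq_one_iff_eq hw.ne']
    exact hj.1

theorem tendsto_expSum_atTop {u : ι → ℝ} (hu0 : ∀ j, 0 < u j) (hu1 : ∀ j, u j < 1)
    (c : ι → ℝ) : Tendsto (expSum u c) atTop (𝓝 0) := by
  have := tendsto_finsetSum univ fun j _ =>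
    (tendsto_rpow_atTop_of_base_lt_one (u j) (by linarith [hu0 j]) (hu1 j)).const_mul (c j)
  unfold expSum
  simpa using this

theorem eventually_expSum_pos {u : ι → ℝ} (hu : ∀ j, 0 < u j) {c : ι → ℝ} {j₀ : ι}
    (hmax : ∀ j, u j ≤ u j₀) (hc : ∀ j, u j = u j₀ → 0 < c j) :
    ∀ᶠ α in atTop, 0 < expSum u c α := by
  classical
  have hM := hu j₀
  have hlim : Tendsto (expSum (fun j => u j / u j₀) c) atTop
      (𝓝 (∑ j, if u j = u j₀ then c j else 0)) := by
    refine tendsto_finsetSum _ fun j _ => ?_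
    split_ifs with hj
    · simp [hj, hM.ne']
    · have hlt : u j / u j₀ < 1 := (div_lt_one hM).2 ((hmax j).lt_of_ne hj)
      simpa using ((tendsto_rpow_atTop_of_base_lt_one _
        (by linarith [div_pos (hu j) hM]) hlt).const_mul (c j))
  have hpos : 0 < ∑ j, if u j = u j₀ then c j else 0 :=
    sum_pos' (fun j _ => by split_ifs with h; exacts [(hc j h).le, le_rfl])
      ⟨j₀, mem_univ _, by simp [hc j₀ rfl]⟩
  filter_upwards [hlim.eventually (eventually_gt_nhds hpos)] with α hα
  rw [expSum_div_const (fun j => (hu j).le) hM.le] at hα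
  exact (div_pos_iff_of_pos_right (rpow_pos_of_pos hM α)).1 hα

end ExpSum

open BoolCube

section NsymDiff

variable {n : ℕ} {p : ℝ}

theorem IsBalanced.exists_eq {f : (Fin n → Bool) → Bool} (hf : IsBalanced n f) (b : Bool) :
    ∃ y, f y = b := by
  by_contra! h
  have h2n : (0 : ℝ) < 2 ^ n := by positivity
  cases b <;> simp [IsBalanced, h] at hf <;> linarith

theorem Tp_sub_half (f : (Fin n → Bool) → Bool) (x : Fin n → Bool) :
    Tp n p f x - 1 / 2 = noise n p (fun y => (if f y then 1 else 0) - 1 / 2) x :=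
  (noise_sub_const p _ _ x).symm

theorem Tp_dict (i : Fin n) (x : Fin n → Bool) :
    Tp n p (dict n i) x = if x i then 1 - p else p := by
  have hcentered : (fun y => (if dict n i y then 1 else 0) - 1 / 2) =
      fun y => -(1 / 2) * walsh {i} y := by
    funext y; by_cases h : y i <;> simp [dict, walsh, h]; norm_num
  have := Tp_sub_half (p := p) (dict n i) x
  rw [hcentered, noise_const_mul, noise_walsh, card_singleton] at this
  simp only [walsh, prod_singleton] at this
  cases h : x i <;> simp [h] at this ⊢ <;> linarith

theorem Tp_mem_Ioo (hp0 : 0 < p) (hp1 : p < 1) {f : (Fin n → Bool) → Bool}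
    (h₁ : ∃ y, f y = true) (h₀ : ∃ y, f y = false) (x : Fin n → Bool) :
    0 < Tp n p f x ∧ Tp n p f x < 1 := by
  have hK := noiseWeight_pos p hp0 hp1 x
  have hT : Tp n p f x = ∑ y, noiseWeight n p x y * (if f y then 1 else 0) := rfl
  have hcompl : 1 - Tp n p f x = ∑ y, noiseWeight n p x y * (1 - if f y then 1 else 0) := by
    simp only [hT, mul_sub, mul_one, sum_sub_distrib, sum_noiseWeight]
  obtain ⟨y₁, hy₁⟩ := h₁
  obtain ⟨y₀, hy₀⟩ := h₀
  constructor
  · exact hT ▸ sum_pos' (fun y _ => mul_nonneg (hK y).le (by split_ifs <;> norm_num))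
      ⟨y₁, mem_univ _, by simp [hy₁, hK]⟩
  · have : 0 < 1 - Tp n p f x := hcompl ▸ sum_pos'
      (fun y _ => mul_nonneg (hK y).le (by split_ifs <;> norm_num)) ⟨y₀, mem_univ _, by simp [hy₀, hK]⟩
    linarith

theorem sum_sq_Tp_sub_half_add_le (hp0 : 0 ≤ p) (hp : p ≤ 1 / 2) {f : (Fin n → Bool) → Bool}
    (hf : IsBalanced n f) :
    ∑ x, (Tp n p f x - 1 / 2) ^ 2 +
      ∑ x, (Tp n p f x - 1 / 2 - (1 - 2 * p) * ((if f x then 1 else 0) - 1 / 2)) ^ 2 ≤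
        2 ^ n * (1 - 2 * p) ^ 2 / 4 := by
  have hmean : ∑ y, ((if f y then 1 else 0) - 1 / 2 : ℝ) = 0 := by
    rw [sum_sub_distrib, hf]
    simp; ring
  have hsq : ∑ y, ((if f y then 1 else 0) - 1 / 2 : ℝ) ^ 2 = 2 ^ n / 4 := by
    have : ∀ y, ((if f y then 1 else 0) - 1 / 2 : ℝ) ^ 2 = 1 / 4 := fun y => by
      by_cases h : f y <;> simp [h] <;> norm_num
    rw [sum_congr rfl fun y _ => this y]
    simp; ring
  have := sum_sq_noise_add_sum_sq_noise_sub_le p hp0 hp _ hmean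
  simp only [← Tp_sub_half, hsq] at this
  linarith

theorem Nsym_eq_of_forall_eq_or_eq {f : (Fin n → Bool) → Bool}
    (hf : ∀ x, Tp n p f x = p ∨ Tp n p f x = 1 - p) (α : ℝ) :
    Nsym n p f α = 2 ^ n * (p ^ α + (1 - p) ^ α) := by
  have hx : ∀ x, Tp n p f x ^ α + (1 - Tp n p f x) ^ α = p ^ α + (1 - p) ^ α := fun x => by
    rcases hf x with h | h <;> rw [h]
    rw [sub_sub_cancel, add_comm]
  simp [Nsym, hx, mul_add]

theorem Nsym_dict (i : Fin n) (α : ℝ) :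
    Nsym n p (dict n i) α = 2 ^ n * (p ^ α + (1 - p) ^ α) :=
  Nsym_eq_of_forall_eq_or_eq (fun x => by rw [Tp_dict]; split_ifs <;> simp) α

noncomputable def nsymDiffBase (n : ℕ) (p : ℝ) (f : (Fin n → Bool) → Bool)
    (j : Option (Fin n → Bool) × Bool) : ℝ :=
  if j.2 then j.1.elim p (Tp n p f) else 1 - j.1.elim p (Tp n p f)

noncomputable def nsymDiffCoeff (n : ℕ) (j : Option (Fin n → Bool) × Bool) : ℝ :=
  j.1.elim (-2 ^ n) fun _ => 1

theorem sum_nsymDiffCoeff_mul (f : (Fin n → Bool) → Bool) (G : ℝ → ℝ) :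
    ∑ j, nsymDiffCoeff n j * G (nsymDiffBase n p f j) =
      ∑ x, (G (Tp n p f x) + G (1 - Tp n p f x)) - 2 ^ n * (G p + G (1 - p)) := by
  simp [Fintype.sum_prod_type, Fintype.sum_option, nsymDiffCoeff, nsymDiffBase]
  ring

theorem expSum_nsymDiff (f : (Fin n → Bool) → Bool) (i : Fin n) (α : ℝ) :
    expSum (nsymDiffBase n p f) (nsymDiffCoeff n) α = Nsym n p f α - Nsym n p (dict n i) α := by
  rw [Nsym_dict]
  exact sum_nsymDiffCoeff_mul f (· ^ α)

theorem expSum_nsymDiff_zero (f : (Fin n → Bool) → Bool) :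
    expSum (nsymDiffBase n p f) (nsymDiffCoeff n) 0 = 0 :=
  (sum_nsymDiffCoeff_mul f (· ^ (0 : ℝ))).trans (by simp; ring)

theorem expSum_nsymDiff_one (f : (Fin n → Bool) → Bool) :
    expSum (nsymDiffBase n p f) (nsymDiffCoeff n) 1 = 0 :=
  (sum_nsymDiffCoeff_mul f (· ^ (1 : ℝ))).trans (by simp)

theorem expSum_nsymDiff_two_neg (hp0 : 0 ≤ p) (hp : p ≤ 1 / 2) {f : (Fin n → Bool) → Bool}
    (hf : IsBalanced n f) {x₀ : Fin n → Bool} (hx₀ : Tp n p f x₀ ≠ p ∧ Tp n p f x₀ ≠ 1 - p) :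
    expSum (nsymDiffBase n p f) (nsymDiffCoeff n) 2 < 0 := by
  have hdefect : 0 < (Tp n p f x₀ - 1 / 2 - (1 - 2 * p) * ((if f x₀ then 1 else 0) - 1 / 2)) ^ 2 := by
    refine pow_two_pos_of_ne_zero fun h => ?_
    by_cases hfx : f x₀ <;> simp only [hfx] at h <;> norm_num at h
    · exact hx₀.2 (by linarith)
    · exact hx₀.1 (by linarith)
  have hgap := sum_sq_Tp_sub_half_add_le hp0 hp hf
  have := single_le_sum (fun x _ => sq_nonneg
    (Tp n p f x - 1 / 2 - (1 - 2 * p) * ((if f x then 1 else 0) - 1 / 2))) (mem_univ x₀)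
  have hsym : ∀ x, Tp n p f x ^ 2 + (1 - Tp n p f x) ^ 2 = 2 * (Tp n p f x - 1 / 2) ^ 2 + 1 / 2 :=
    fun x => by ring
  refine (sum_nsymDiffCoeff_mul f (· ^ (2 : ℝ))).trans_lt ?_
  simp only [rpow_two, hsym, sum_add_distrib, ← mul_sum, sum_const, card_univ, Fintype.card_fun,
    Fintype.card_bool, Fintype.card_fin, nsmul_eq_mul]
  push_cast
  nlinarith

theorem log_two_mul_binEnt (t : ℝ) :
    log 2 * binEnt t = -(log t * t + log (1 - t) * (1 - t)) := by
  have : log 2 ≠ 0 := (log_pos one_lt_two).ne'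
  simp only [binEnt, logb]
  field_simp
  ring

theorem expSum_nsymDiff_mul_log_one_nonpos {f : (Fin n → Bool) → Bool}
    (hMI : MI n p f ≤ 1 - binEnt p) :
    expSum (nsymDiffBase n p f) (fun j => nsymDiffCoeff n j * log (nsymDiffBase n p f j)) 1 ≤ 0 := by
  have hent : 2 ^ n * binEnt p ≤ ∑ x, binEnt (Tp n p f x) := by
    rw [MI] at hMI
    exact (le_inv_mul_iff₀ (by positivity)).1 (by linarith)
  have hG : ∀ t : ℝ, log t * t ^ (1 : ℝ) + log (1 - t) * (1 - t) ^ (1 : ℝ) = -(log 2 * binEnt t) := by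
    intro t; rw [rpow_one, rpow_one, log_two_mul_binEnt, neg_neg]
  calc expSum (nsymDiffBase n p f) (fun j => nsymDiffCoeff n j * log (nsymDiffBase n p f j)) 1
      = ∑ x, (log (Tp n p f x) * Tp n p f x ^ (1 : ℝ) +
            log (1 - Tp n p f x) * (1 - Tp n p f x) ^ (1 : ℝ)) -
          2 ^ n * (log p * p ^ (1 : ℝ) + log (1 - p) * (1 - p) ^ (1 : ℝ)) :=
        (sum_congr rfl fun j _ => mul_assoc _ _ _).trans
          (sum_nsymDiffCoeff_mul f fun t => log t * t ^ (1 : ℝ))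
    _ = -(log 2 * (∑ x, binEnt (Tp n p f x) - 2 ^ n * binEnt p)) := by
        simp only [hG, sum_neg_distrib, ← mul_sum]; ring
    _ ≤ 0 := neg_nonpos.2 (mul_nonneg (log_pos one_lt_two).le (sub_nonneg.2 hent))

theorem nsymDiffBase_mem_Ioo (hp0 : 0 < p) (hp1 : p < 1) {f : (Fin n → Bool) → Bool}
    (hf : IsBalanced n f) (j : Option (Fin n → Bool) × Bool) :
    0 < nsymDiffBase n p f j ∧ nsymDiffBase n p f j < 1 := by
  obtain ⟨_ | x, _ | _⟩ := j
  · simp only [nsymDiffBase]; constructor <;> simp <;> linarith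
  · simp only [nsymDiffBase]; constructor <;> simp <;> linarith
  · have := Tp_mem_Ioo hp0 hp1 (hf.exists_eq true) (hf.exists_eq false) x
    simp only [nsymDiffBase]; constructor <;> simp <;> linarith
  · exact Tp_mem_Ioo hp0 hp1 (hf.exists_eq true) (hf.exists_eq false) x

theorem nsymDiff_not_three_deriv_zeros (hp0 : 0 < p) (hp1 : p < 1)
    {f : (Fin n → Bool) → Bool} (hf : IsBalanced n f) {x₀ : Fin n → Bool}
    (hx₀ : Tp n p f x₀ ≠ p ∧ Tp n p f x₀ ≠ 1 - p)
    (hmid : ∀ x, p ≤ Tp n p f x ∧ Tp n p f x ≤ 1 - p) {ξ : Fin 3 → ℝ} (hξ : StrictMono ξ) :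
    ¬ ∀ i, expSum (nsymDiffBase n p f)
      (fun j => nsymDiffCoeff n j * log (nsymDiffBase n p f j)) (ξ i) = 0 := by
  intro hzero
  have hT := nsymDiffBase_mem_Ioo hp0 hp1 hf (some x₀, true)
  refine log_ne_zero_of_pos_of_ne_one hT.1 hT.2.ne ?_
  have hsign : ∀ j, 0 ≤ nsymDiffCoeff n j * log (nsymDiffBase n p f j) *
      ([p, 1 - p].map fun w => log (nsymDiffBase n p f j / w)).prod := by
    have hq : (1 : ℝ) - p ≠ 0 := by linarith
    rintro ⟨_ | x, b⟩
    · cases b <;> simp [nsymDiffBase, hq, hp0.ne']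
    obtain ⟨hv0, hv1⟩ := nsymDiffBase_mem_Ioo hp0 hp1 hf (some x, b)
    have hvmid : p ≤ nsymDiffBase n p f (some x, b) ∧ nsymDiffBase n p f (some x, b) ≤ 1 - p := by
      have := hmid x
      cases b <;> simp only [nsymDiffBase] <;> constructor <;> simp <;> linarith
    generalize nsymDiffBase n p f (some x, b) = v at hv0 hv1 hvmid ⊢
    simp only [nsymDiffCoeff, Option.elim, one_mul, List.map_cons, List.map_nil, List.prod_cons,
      List.prod_nil, mul_one]
    refine mul_nonneg_of_nonpos_of_nonpos (log_nonpos hv0.le hv1.le)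
      (mul_nonpos_of_nonneg_of_nonpos (log_nonneg ?_) (log_nonpos (div_pos hv0 (by linarith)).le ?_))
    · rw [le_div_iff₀ hp0]; linarith
    · rw [div_le_one (by linarith)]; exact hvmid.2
  simpa [nsymDiffCoeff] using expSum_coeff_eq_zero_of_strictMono_zeros
    (fun j => (nsymDiffBase_mem_Ioo hp0 hp1 hf j).1) [p, 1 - p] (by simp [hp0, hp1]) _ hsign hξ
    hzero (j := (some x₀, true)) (by simp [nsymDiffBase, hx₀.1, hx₀.2])

theorem nsymDiff_not_five_deriv_zeros (hp0 : 0 < p) (hp1 : p < 1)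
    {f : (Fin n → Bool) → Bool} (hf : IsBalanced n f) {x₀ : Fin n → Bool}
    (hx₀ : Tp n p f x₀ ≠ p ∧ Tp n p f x₀ ≠ 1 - p) {ξ : Fin 5 → ℝ} (hξ : StrictMono ξ) :
    ¬ ∀ i, expSum (nsymDiffBase n p f)
      (fun j => nsymDiffCoeff n j * log (nsymDiffBase n p f j)) (ξ i) = 0 := by
  intro hzero
  have hT := nsymDiffBase_mem_Ioo hp0 hp1 hf (some x₀, true)
  refine log_ne_zero_of_pos_of_ne_one hT.1 hT.2.ne ?_
  have hsign : ∀ j, 0 ≤ -(nsymDiffCoeff n j * log (nsymDiffBase n p f j)) *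
      ([p, 1 - p, p, 1 - p].map fun w => log (nsymDiffBase n p f j / w)).prod := by
    have hq : (1 : ℝ) - p ≠ 0 := by linarith
    rintro ⟨_ | x, b⟩
    · cases b <;> simp [nsymDiffBase, hq, hp0.ne']
    obtain ⟨hv0, hv1⟩ := nsymDiffBase_mem_Ioo hp0 hp1 hf (some x, b)
    generalize nsymDiffBase n p f (some x, b) = v at hv0 hv1 ⊢
    simp only [nsymDiffCoeff, Option.elim, one_mul, List.map_cons, List.map_nil, List.prod_cons,
      List.prod_nil, mul_one]
    have hsq : log (v / p) * (log (v / (1 - p)) * (log (v / p) * log (v / (1 - p)))) =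
        (log (v / p) * log (v / (1 - p))) ^ 2 := by ring
    rw [hsq]
    exact mul_nonneg (neg_nonneg.2 (log_nonpos hv0.le hv1.le)) (sq_nonneg _)
  simpa [nsymDiffCoeff] using expSum_coeff_eq_zero_of_strictMono_zeros
    (fun j => (nsymDiffBase_mem_Ioo hp0 hp1 hf j).1) [p, 1 - p, p, 1 - p] (by simp [hp0, hp1])
    _ hsign hξ (fun i => by rw [expSum_neg, hzero, neg_zero]) (j := (some x₀, true))
    (by simp [nsymDiffBase, hx₀.1, hx₀.2])

theorem eventually_expSum_nsymDiff_pos (hp0 : 0 < p) (hp : p < 1 / 2)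
    {f : (Fin n → Bool) → Bool} (hf : IsBalanced n f) {x : Fin n → Bool}
    (hx : Tp n p f x < p ∨ 1 - p < Tp n p f x) :
    ∀ᶠ β in atTop, 0 < expSum (nsymDiffBase n p f) (nsymDiffCoeff n) β := by
  obtain ⟨j₀, hj₀⟩ := Finite.exists_max (nsymDiffBase n p f)
  have hbig : 1 - p < nsymDiffBase n p f j₀ := by
    rcases hx with hx | hx
    · exact lt_of_lt_of_le (by simp [nsymDiffBase]; linarith) (hj₀ (some x, false))
    · exact lt_of_lt_of_le hx (hj₀ (some x, true))
  refine eventually_expSum_pos (fun j => (nsymDiffBase_mem_Ioo hp0 (by linarith) hf j).1) hj₀ ?_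
  rintro ⟨_ | y, b⟩ hy
  · rw [← hy] at hbig
    cases b
    · simp [nsymDiffBase] at hbig
    · simp [nsymDiffBase] at hbig; linarith
  · simp [nsymDiffCoeff]

theorem expSum_nsymDiff_nonpos (hp0 : 0 < p) (hp : p < 1 / 2) {f : (Fin n → Bool) → Bool}
    (hf : IsBalanced n f) (hMI : MI n p f ≤ 1 - binEnt p) {x₀ : Fin n → Bool}
    (hx₀ : Tp n p f x₀ ≠ p ∧ Tp n p f x₀ ≠ 1 - p) {α : ℝ} (hα : α ∈ Set.Icc (1 : ℝ) 2) :
    expSum (nsymDiffBase n p f) (nsymDiffCoeff n) α ≤ 0 := by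
  have hp1 : p < 1 := by linarith
  have hu := nsymDiffBase_mem_Ioo hp0 hp1 hf
  have hg := hasDerivAt_expSum (fun j => (hu j).1) (nsymDiffCoeff n)
  have hcont : Continuous (expSum (nsymDiffBase n p f) (nsymDiffCoeff n)) :=
    continuous_iff_continuousAt.2 fun β => (hg β).continuousAt
  have hg1 := expSum_nsymDiff_one (p := p) f
  have hg2 := expSum_nsymDiff_two_neg hp0.le hp.le hf hx₀
  by_contra! hgα
  obtain ⟨ζ₂, hζ₂, hgζ₂⟩ := intermediate_value_Ioo' hα.2 hcont.continuousOn ⟨hg2, hgα⟩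
  obtain ⟨ξ₁, hξ₁, hdξ₁⟩ := exists_hasDerivAt_eq_zero one_pos hcont.continuousOn
    ((expSum_nsymDiff_zero f).trans hg1.symm) fun β _ => hg β
  obtain ⟨ξ₂, ξ₃, h12, h23, h3ζ, hdξ₂, hdξ₃⟩ := exists_two_hasDerivAt_eq_zero_of_deriv_nonpos hg
    (hα.1.lt_of_ne (by rintro rfl; linarith)) hζ₂.1 hg1 hgζ₂
    (expSum_nsymDiff_mul_log_one_nonpos hMI) hgα
  by_cases hmid : ∀ x, p ≤ Tp n p f x ∧ Tp n p f x ≤ 1 - p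
  · refine nsymDiff_not_three_deriv_zeros hp0 hp1 hf hx₀ hmid (ξ := ![ξ₁, ξ₂, ξ₃]) ?_ ?_
    · simp [strictMono_vecCons, hξ₁.2.trans_le h12, h23]
    · simp [Fin.forall_fin_succ, hdξ₁, hdξ₂, hdξ₃]
  obtain ⟨x, hx⟩ : ∃ x, Tp n p f x < p ∨ 1 - p < Tp n p f x := by
    push Not at hmid
    obtain ⟨x, hx⟩ := hmid
    exact ⟨x, (lt_or_ge _ p).imp_right hx⟩
  have hpos := eventually_expSum_nsymDiff_pos hp0 hp hf hx
  obtain ⟨b, hb, h2b⟩ := (hpos.and (eventually_gt_atTop 2)).exists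
  obtain ⟨ζ₃, hζ₃, hgζ₃⟩ := intermediate_value_Ioo h2b.le hcont.continuousOn ⟨hg2, hb⟩
  obtain ⟨ξ₄, hξ₄, hdξ₄⟩ := exists_hasDerivAt_eq_zero (hζ₂.2.trans hζ₃.1) hcont.continuousOn
    (hgζ₂.trans hgζ₃.symm) fun β _ => hg β
  obtain ⟨ξ₅, hξ₅, hdξ₅⟩ := exists_hasDerivAt_eq_zero_of_tendsto_atTop hg hgζ₃ hpos
    (tendsto_expSum_atTop (fun j => (hu j).1) (fun j => (hu j).2) _)
  refine nsymDiff_not_five_deriv_zeros hp0 hp1 hf hx₀ (ξ := ![ξ₁, ξ₂, ξ₃, ξ₄, ξ₅]) ?_ ?_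
  · simp [strictMono_vecCons, hξ₁.2.trans_le h12, h23, h3ζ.trans hξ₄.1, hξ₄.2.trans hξ₅]
  · simp [Fin.forall_fin_succ, hdξ₁, hdξ₂, hdξ₃, hdξ₄, hdξ₅]

end NsymDiff

/-- If the Courtade–Kumar conjecture holds for all balanced functions on the `n`-cube at
noise level `p`, then the symmetrized Li–Médard conjecture holds at that level. -/
theorem CK_implies_sym_li_medard (n : ℕ) (p : ℝ) (hp : 0 < p) (hp2 : p < 1/2)
    (hCK : ∀ f : (Fin n → Bool) → Bool, IsBalanced n f → MI n p f ≤ 1 - binEnt p) :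
    ∀ f : (Fin n → Bool) → Bool, IsBalanced n f → ∀ i : Fin n,
      ∀ α ∈ Set.Icc (1 : ℝ) 2, Nsym n p f α ≤ Nsym n p (dict n i) α := by
  intro f hf i α hα
  by_cases hdeg : ∀ x, Tp n p f x = p ∨ Tp n p f x = 1 - p
  · rw [Nsym_eq_of_forall_eq_or_eq hdeg, Nsym_dict]
  push Not at hdeg
  obtain ⟨x₀, hx₀⟩ := hdeg
  rw [← sub_nonpos, ← expSum_nsymDiff f i]
  exact expSum_nsymDiff_nonpos hp hp2 hf (hCK f hf) hx₀ hα
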